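/- arXiv:2211.04127 — 2 statements merged into one kernel-verified Lean document; each statement's English description precedes it below -/
import Mathlib

section
/- Every finite group acting by isometries on a complete simply connected Riemannian manifold of non-positive sectional curvature (a Hadamard manifold) has a fixed point. -/
/-!
Averaging an orbit with the midpoint map contracts it. Busemann convexity gives the conical
inequality `d(q, m x y) ≤ (d(q, x) + d(q, y)) / 2`, so the dyadic iterated midpoint `c` of
`2 ^ s` points `y i` satisfies `2 ^ s d(q, c) ≤ ∑ d(q, y i)`. Take for the `y i` an orbit
`σ i • p` listing every group element (with repetitions), and let `δ p` be the largest displacement `d(p, g • p)`.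
For `q` in the orbit one term of the sum vanishes, so every orbit point lies within
`λ δ p`, `λ = 1 - 2 ^ (-s)`, of `c`; since the orbit is invariant, `δ c ≤ λ δ p`. Also
`d(p, c) ≤ δ p`, so iterating `p ↦ c` gives a Cauchy sequence whose limit is fixed.
-/

open Finset

def dyadicMean {M : Type*} (m : M → M → M) : ℕ → (ℕ → M) → M
  | 0, f => f 0
  | s + 1, f => m (dyadicMean m s f) (dyadicMean m s fun i => f (i + 2 ^ s))

section DyadicMean

variable {M : Type*} [MetricSpace M] {m : M → M → M}

theorem dist_le_add_div_two_of_busemann (hmid : ∀ x y : M, dist (m x y) y = dist x y / 2)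
    (hnpc : ∀ x y z : M, dist (m x y) (m x z) ≤ dist y z / 2) (q x y : M) :
    dist q (m x y) ≤ (dist q x + dist q y) / 2 :=
  calc dist q (m x y) ≤ dist q (m x q) + dist (m x q) (m x y) := dist_triangle _ _ _
    _ ≤ dist x q / 2 + dist q y / 2 := by
        gcongr
        · rw [dist_comm, hmid]
        · exact hnpc x q y
    _ = (dist q x + dist q y) / 2 := by rw [dist_comm x q]; ring

theorem two_pow_mul_dist_dyadicMean_le
    (hm : ∀ q x y : M, dist q (m x y) ≤ (dist q x + dist q y) / 2) (s : ℕ) (f : ℕ → M) (q : M) :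
    2 ^ s * dist q (dyadicMean m s f) ≤ ∑ i ∈ range (2 ^ s), dist q (f i) := by
  induction s generalizing f with
  | zero => simp [dyadicMean]
  | succ s ih =>
    have hsplit : ∑ i ∈ range (2 ^ (s + 1)), dist q (f i)
        = ∑ i ∈ range (2 ^ s), dist q (f i) + ∑ i ∈ range (2 ^ s), dist q (f (i + 2 ^ s)) := by
      simp only [pow_succ, mul_two, sum_range_add, add_comm (2 ^ s)]
    have hmid := hm q (dyadicMean m s f) (dyadicMean m s fun i => f (i + 2 ^ s))
    have h2s : (0 : ℝ) < 2 ^ s := by positivity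
    rw [hsplit, dyadicMean, pow_succ]
    nlinarith [ih f, ih fun i => f (i + 2 ^ s)]

theorem dist_dyadicMean_le (hm : ∀ q x y : M, dist q (m x y) ≤ (dist q x + dist q y) / 2)
    {s : ℕ} {f : ℕ → M} {q : M} {r : ℝ} (hr : ∀ i < 2 ^ s, dist q (f i) ≤ r) :
    dist q (dyadicMean m s f) ≤ r := by
  have hsum : ∑ i ∈ range (2 ^ s), dist q (f i) ≤ 2 ^ s * r := by
    simpa using sum_le_card_nsmul _ _ r fun i hi => hr i (mem_range.1 hi)
  exact le_of_mul_le_mul_left ((two_pow_mul_dist_dyadicMean_le hm s f q).trans hsum)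
    (by positivity)

theorem dist_dyadicMean_le_of_lt (hm : ∀ q x y : M, dist q (m x y) ≤ (dist q x + dist q y) / 2)
    {s j : ℕ} {f : ℕ → M} {r : ℝ} (hj : j < 2 ^ s) (hr : ∀ i < 2 ^ s, dist (f j) (f i) ≤ r) :
    dist (f j) (dyadicMean m s f) ≤ (1 - (2 ^ s)⁻¹) * r := by
  have hj' : j ∈ range (2 ^ s) := mem_range.2 hj
  have hsum : ∑ i ∈ range (2 ^ s), dist (f j) (f i) ≤ (2 ^ s - 1) * r := by
    rw [← add_sum_erase _ _ hj', dist_self, zero_add]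
    have := sum_le_card_nsmul ((range (2 ^ s)).erase j) _ r
      fun i hi => hr i (mem_range.1 (mem_of_mem_erase hi))
    simpa [card_erase_of_mem hj', Nat.cast_sub Nat.one_le_two_pow] using this
  have := two_pow_mul_dist_dyadicMean_le hm s f (f j)
  have h2s : (0 : ℝ) < 2 ^ s := by positivity
  rw [show (1 - (2 ^ s)⁻¹) * r = (2 ^ s - 1) * r / 2 ^ s by field_simp, le_div_iff₀ h2s]
  linarith

end DyadicMean

theorem exists_nonpos_of_iterate_contracts {M : Type*} [MetricSpace M] [CompleteSpace M]
    (p₀ : M) {φ : M → ℝ} (hφ : Continuous φ) {T : M → M} {c : ℝ} (hc₀ : 0 ≤ c) (hc₁ : c < 1)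
    (hstep : ∀ p, dist p (T p) ≤ φ p) (hcontr : ∀ p, φ (T p) ≤ c * φ p) : ∃ p, φ p ≤ 0 := by
  have hφk : ∀ k, φ (T^[k] p₀) ≤ c ^ k * φ p₀ := by
    intro k
    induction k with
    | zero => simp
    | succ k ih =>
      rw [Function.iterate_succ_apply', pow_succ', mul_assoc]
      exact (hcontr _).trans (by gcongr)
  have hcauchy : CauchySeq fun k => T^[k] p₀ :=
    cauchySeq_of_le_geometric c (φ p₀) hc₁ fun k => by
      rw [Function.iterate_succ_apply', mul_comm]
      exact (hstep _).trans (hφk k)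
  obtain ⟨p, hp⟩ := cauchySeq_tendsto_of_complete hcauchy
  refine ⟨p, le_of_tendsto_of_tendsto' ((hφ.tendsto p).comp hp) ?_ hφk⟩
  simpa using (tendsto_pow_atTop_nhds_zero_of_lt_one hc₀ hc₁).mul_const (φ p₀)

theorem exists_enumeration_below_two_pow (α : Type*) [Finite α] [Nonempty α] :
    ∃ (s : ℕ) (σ : ℕ → α), ∀ a, ∃ i < 2 ^ s, σ i = a := by
  classical
  obtain ⟨n, ⟨e⟩⟩ := Finite.exists_equiv_fin α
  refine ⟨n, fun i => if h : i < n then e.symm ⟨i, h⟩ else Classical.arbitrary α, fun a => ?_⟩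
  exact ⟨e a, (e a).2.trans Nat.lt_two_pow_self, by simp⟩

section Displacement

variable {M : Type*} [MetricSpace M] {G : Type*} [Group G] (ρ : G →* (M ≃ᵢ M))

theorem dist_apply_apply (a b : G) (x y : M) : dist (ρ a x) (ρ b y) = dist x (ρ (a⁻¹ * b) y) := by
  rw [← (ρ a⁻¹).dist_eq, map_mul, IsometryEquiv.mul_apply, ← IsometryEquiv.mul_apply, ← map_mul,
    inv_mul_cancel, map_one]
  rfl

variable [Fintype G]

noncomputable def displacement (p : M) : ℝ :=
  univ.sup' univ_nonempty fun g => dist p (ρ g p)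

theorem dist_le_displacement (p : M) (g : G) : dist p (ρ g p) ≤ displacement ρ p :=
  le_sup' (fun g => dist p (ρ g p)) (mem_univ g)

theorem displacement_le {p : M} {r : ℝ} (h : ∀ g, dist p (ρ g p) ≤ r) : displacement ρ p ≤ r :=
  sup'_le _ _ fun g _ => h g

theorem continuous_displacement : Continuous (displacement ρ) :=
  Continuous.finset_sup'_apply _ fun g _ => continuous_id.dist (ρ g).continuous

theorem dist_apply_apply_le_displacement (p : M) (a b : G) :
    dist (ρ a p) (ρ b p) ≤ displacement ρ p := by
  rw [dist_apply_apply]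
  exact dist_le_displacement ρ p _

theorem displacement_dyadicMean_le {m : M → M → M}
    (hm : ∀ q x y : M, dist q (m x y) ≤ (dist q x + dist q y) / 2)
    {σ : ℕ → G} {s : ℕ} (hσ : ∀ g, ∃ i < 2 ^ s, σ i = g) (p : M) :
    displacement ρ (dyadicMean m s fun i => ρ (σ i) p) ≤ (1 - (2 ^ s)⁻¹) * displacement ρ p := by
  set c := dyadicMean m s fun i => ρ (σ i) p
  have horbit : ∀ g, dist (ρ g p) c ≤ (1 - (2 ^ s)⁻¹) * displacement ρ p := by
    intro g
    obtain ⟨j, hj, rfl⟩ := hσ g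
    exact dist_dyadicMean_le_of_lt (f := fun i => ρ (σ i) p) hm hj
      fun i _ => dist_apply_apply_le_displacement ρ p _ _
  refine displacement_le ρ fun h => ?_
  -- `ρ h` maps `ρ h⁻¹ c` to `c` and permutes the orbit, so `horbit` applies
  have key : dist (ρ h⁻¹ c) c ≤ (1 - (2 ^ s)⁻¹) * displacement ρ p := by
    refine dist_dyadicMean_le hm fun i _ => ?_
    rw [dist_apply_apply, inv_inv, dist_comm]
    exact horbit _
  calc dist c (ρ h c) = dist (ρ h⁻¹ c) (ρ 1 c) := by rw [dist_apply_apply, inv_inv, mul_one]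
    _ = dist (ρ h⁻¹ c) c := by rw [map_one]; rfl
    _ ≤ _ := key

end Displacement

theorem stmt_4_general {M : Type*} [MetricSpace M] [Nonempty M] [CompleteSpace M]
    (m : M → M → M)
    (hmid : ∀ x y : M, dist x (m x y) = dist x y / 2 ∧ dist (m x y) y = dist x y / 2)
    (hnpc : ∀ x y z : M, dist (m x y) (m x z) ≤ dist y z / 2)
    {G : Type*} [Group G] [Finite G] (ρ : G →* (M ≃ᵢ M)) :
    ∃ p : M, ∀ g : G, ρ g p = p := by
  have := Fintype.ofFinite G
  have hm := dist_le_add_div_two_of_busemann (fun x y => (hmid x y).2) hnpc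
  obtain ⟨s, σ, hσ⟩ := exists_enumeration_below_two_pow G
  have hc₀ : (0 : ℝ) ≤ 1 - (2 ^ s)⁻¹ := sub_nonneg.2 (inv_le_one_of_one_le₀ (one_le_pow₀ one_le_two))
  have hc₁ : (1 : ℝ) - (2 ^ s)⁻¹ < 1 := sub_lt_self _ (by positivity)
  obtain ⟨p, hp⟩ := exists_nonpos_of_iterate_contracts (Classical.arbitrary M)
    (continuous_displacement ρ) hc₀ hc₁
    (fun p => dist_dyadicMean_le hm fun i _ => dist_le_displacement ρ p (σ i))
    (displacement_dyadicMean_le ρ hm hσ)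
  exact ⟨p, fun g => (dist_le_zero.1 ((dist_le_displacement ρ p g).trans hp)).symm⟩

/-- Cartan's fixed point theorem. A Hadamard manifold is a complete simply connected
Riemannian manifold of non-positive sectional curvature; metrically this is a complete,
simply connected geodesic space with a midpoint map `m` satisfying Busemann's
non-positive-curvature comparison inequality `d(m(x,y), m(x,z)) ≤ d(y,z)/2`
(for Riemannian manifolds this is equivalent to sectional curvature ≤ 0).
Every finite group acting by isometries on such a space has a fixed point. -/
theorem stmt_4 {M : Type*} [MetricSpace M] [Nonempty M] [CompleteSpace M]
    [SimplyConnectedSpace M]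
    (m : M → M → M)
    (hmid : ∀ x y : M, dist x (m x y) = dist x y / 2 ∧ dist (m x y) y = dist x y / 2)
    (hnpc : ∀ x y z : M, dist (m x y) (m x z) ≤ dist y z / 2)
    {G : Type*} [Group G] [Finite G] (ρ : G →* (M ≃ᵢ M)) :
    ∃ p : M, ∀ g : G, ρ g p = p :=
  stmt_4_general m hmid hnpc ρ
end

section
/- Let Λ be a lattice (finitely generated free ℤ-module with a nondegenerate symmetric bilinear form) of signature (3, n) with n ≥ 1, and let G be a finite group acting on Λ by isometries preserving a positive-definite 3-dimensional subspace P of Λ ⊗ ℝ. Let I_G ⊆ Λ ⊗ ℝ be the sum of all irreducible real G-subrepresentations of Λ ⊗ ℝ isomorphic to a subrepresentation of P. Then the sublattice L_G = I_G^⊥ ∩ Λ is negative definite. -/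
/-!
Every irreducible subrepresentation of `P` is (identically) isomorphic to one in `P`, so lies in
`I_G`. Since `B` is positive definite on `P`, the orthogonal complement of `I_G ∩ P` in `P` is an
invariant complement; if it were nonzero it would contain an irreducible subrepresentation, lying
both in `I_G ∩ P` and orthogonal to it. Hence `P ≤ I_G` and `L_G ⊆ P^⊥`. A nonzero `x ∈ P^⊥` with `B x x ≥ 0` would make `P ⊕ ℝx`
a `4`-dimensional positive semidefinite subspace, which a form of signature `(3, n)` lacks.
-/

open Module

section Representation

variable {V : Type*} [AddCommGroup V] [Module ℝ V] {G : Type*} [Group G]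

def IsInvariantSubspace (ρ : G →* (V ≃ₗ[ℝ] V)) (W : Submodule ℝ V) : Prop :=
  ∀ g : G, W.map (ρ g).toLinearMap = W

def IsIrreducibleSubspace (ρ : G →* (V ≃ₗ[ℝ] V)) (W : Submodule ℝ V) : Prop :=
  IsInvariantSubspace ρ W ∧ W ≠ ⊥ ∧
    ∀ W' ≤ W, IsInvariantSubspace ρ W' → W' = ⊥ ∨ W' = W

variable {ρ : G →* (V ≃ₗ[ℝ] V)} {W W' : Submodule ℝ V}

lemma apply_apply_inv (ρ : G →* (V ≃ₗ[ℝ] V)) (g : G) (v : V) : ρ g (ρ g⁻¹ v) = v := by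
  change (ρ g * ρ g⁻¹) v = v
  rw [← map_mul, mul_inv_cancel, map_one, LinearEquiv.coe_one, id]

lemma IsInvariantSubspace.apply_mem (hW : IsInvariantSubspace ρ W) (g : G) {v : V}
    (hv : v ∈ W) : ρ g v ∈ W :=
  hW g ▸ Submodule.mem_map_of_mem hv

lemma isInvariantSubspace_of_apply_mem (h : ∀ g : G, ∀ v ∈ W, ρ g v ∈ W) :
    IsInvariantSubspace ρ W := by
  refine fun g ↦ le_antisymm (Submodule.map_le_iff_le_comap.mpr fun v hv ↦ h g v hv)
    fun v hv ↦ ⟨ρ g⁻¹ v, h g⁻¹ v hv, apply_apply_inv ρ g v⟩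

lemma IsInvariantSubspace.inf (hW : IsInvariantSubspace ρ W) (hW' : IsInvariantSubspace ρ W') :
    IsInvariantSubspace ρ (W ⊓ W') :=
  isInvariantSubspace_of_apply_mem fun g _ hv ↦ ⟨hW.apply_mem g hv.1, hW'.apply_mem g hv.2⟩

lemma isInvariantSubspace_sSup {S : Set (Submodule ℝ V)}
    (hS : ∀ W ∈ S, IsInvariantSubspace ρ W) : IsInvariantSubspace ρ (sSup S) := by
  intro g
  simp only [sSup_eq_iSup, Submodule.map_iSup]
  exact iSup_congr fun W ↦ iSup_congr fun hW ↦ hS W hW g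

lemma IsInvariantSubspace.orthogonal {B : LinearMap.BilinForm ℝ V}
    (hiso : ∀ (g : G) (x y : V), B (ρ g x) (ρ g y) = B x y) (hW : IsInvariantSubspace ρ W) :
    IsInvariantSubspace ρ (B.orthogonal W) := by
  refine isInvariantSubspace_of_apply_mem fun g v hv w hw ↦ ?_
  change B w (ρ g v) = 0
  rw [← apply_apply_inv ρ g w, hiso]
  exact hv _ (hW.apply_mem g⁻¹ hw)

lemma IsInvariantSubspace.exists_isIrreducibleSubspace_le [FiniteDimensional ℝ V]
    (hW : IsInvariantSubspace ρ W) (hne : W ≠ ⊥) : ∃ W' ≤ W, IsIrreducibleSubspace ρ W' := by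
  obtain ⟨M, ⟨hMW, hMne, hMinv⟩, hmin⟩ := wellFounded_lt.has_min
    {W' | W' ≤ W ∧ W' ≠ ⊥ ∧ IsInvariantSubspace ρ W'} ⟨W, le_rfl, hne, hW⟩
  refine ⟨M, hMW, hMinv, hMne, fun W' hW'M hW'inv ↦ ?_⟩
  by_contra! h
  exact hmin W' ⟨hW'M.trans hMW, h.1, hW'inv⟩ (lt_of_le_of_ne hW'M h.2)

end Representation

section PositiveSubspace

variable {V : Type*} [AddCommGroup V] [Module ℝ V] {B : LinearMap.BilinForm ℝ V}
  {P K : Submodule ℝ V}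

lemma disjoint_orthogonal_of_pos (hK : ∀ v ∈ K, v ≠ 0 → 0 < B v v) :
    Disjoint K (B.orthogonal K) := by
  refine Submodule.disjoint_def.mpr fun v hvK hvO ↦ ?_
  by_contra hv
  exact (hK v hvK hv).ne' (hvO v hvK)

lemma isCompl_orthogonal_of_pos [FiniteDimensional ℝ V] (hB : B.IsRefl)
    (hK : ∀ v ∈ K, v ≠ 0 → 0 < B v v) : IsCompl K (B.orthogonal K) :=
  B.isCompl_orthogonal_of_restrict_nondegenerate hB
    (B.nondegenerate_restrict_of_disjoint_orthogonal hB (disjoint_orthogonal_of_pos hK))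

lemma sup_inf_orthogonal_eq_of_pos [FiniteDimensional ℝ V] (hB : B.IsRefl)
    (hP : ∀ v ∈ P, v ≠ 0 → 0 < B v v) (hKP : K ≤ P) : K ⊔ P ⊓ B.orthogonal K = P := by
  rw [inf_comm, ← sup_inf_assoc_of_le _ hKP,
    (isCompl_orthogonal_of_pos hB fun v hv ↦ hP v (hKP hv)).sup_eq_top, top_inf_eq]

lemma nonneg_sup_span_of_orthogonal (hB : B.IsRefl) (hPpos : ∀ v ∈ P, v ≠ 0 → 0 < B v v)
    {x : V} (hxP : ∀ y ∈ P, B x y = 0) (hx : 0 ≤ B x x) :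
    ∀ w ∈ P ⊔ ℝ ∙ x, 0 ≤ B w w := by
  intro w hw
  obtain ⟨p, hp, z, hz, rfl⟩ := Submodule.mem_sup.mp hw
  obtain ⟨t, rfl⟩ := Submodule.mem_span_singleton.mp hz
  have hpx : B p x = 0 := hB _ _ (hxP p hp)
  have hpp : 0 ≤ B p p := by
    rcases eq_or_ne p 0 with rfl | hp0
    · simp
    · exact (hPpos p hp hp0).le
  have hexpand : B (p + t • x) (p + t • x) = B p p + t * t * B x x := by
    simp only [map_add, map_smul, LinearMap.add_apply, LinearMap.smul_apply, smul_eq_mul,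
      hpx, hxP p hp]
    ring
  rw [hexpand]
  have := mul_nonneg (mul_self_nonneg t) hx
  linarith

end PositiveSubspace

section InvariantPositiveSubspace

variable {V : Type*} [AddCommGroup V] [Module ℝ V] [FiniteDimensional ℝ V] {G : Type*} [Group G]
  {ρ : G →* (V ≃ₗ[ℝ] V)} {B : LinearMap.BilinForm ℝ V} {P S : Submodule ℝ V}

lemma le_of_forall_isIrreducibleSubspace_le (hB : B.IsRefl)
    (hiso : ∀ (g : G) (x y : V), B (ρ g x) (ρ g y) = B x y)
    (hPinv : IsInvariantSubspace ρ P) (hPpos : ∀ v ∈ P, v ≠ 0 → 0 < B v v)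
    (hSinv : IsInvariantSubspace ρ S)
    (hirr : ∀ W ≤ P, IsIrreducibleSubspace ρ W → W ≤ S) : P ≤ S := by
  set K := S ⊓ P
  have hKpos : ∀ v ∈ K, v ≠ 0 → 0 < B v v := fun v hv ↦ hPpos v hv.2
  suffices hbot : P ⊓ B.orthogonal K = ⊥ by
    rw [← sup_inf_orthogonal_eq_of_pos hB hPpos inf_le_right, hbot, sup_bot_eq]
    exact inf_le_left
  by_contra hne
  obtain ⟨W, hWle, hWirr⟩ :=
    (hPinv.inf ((hSinv.inf hPinv).orthogonal hiso)).exists_isIrreducibleSubspace_le hne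
  have hWK : W ≤ K := le_inf (hirr W (hWle.trans inf_le_left) hWirr) (hWle.trans inf_le_left)
  exact hWirr.2.1 (eq_bot_iff.mpr fun v hv ↦ (Submodule.disjoint_def.mp
    (disjoint_orthogonal_of_pos hKpos)) v (hWK hv) (hWle hv).2)

end InvariantPositiveSubspace

section Signature

variable {V : Type*} [AddCommGroup V] [Module ℝ V] [FiniteDimensional ℝ V]
  {B : LinearMap.BilinForm ℝ V} {Vp Vn W P : Submodule ℝ V}

lemma finrank_le_of_forall_nonneg (hVn : ∀ v ∈ Vn, v ≠ 0 → B v v < 0) (hsup : Vp ⊔ Vn = ⊤)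
    (hW : ∀ w ∈ W, 0 ≤ B w w) : finrank ℝ W ≤ finrank ℝ Vp := by
  have hdisj : Disjoint W Vn := Submodule.disjoint_def.mpr fun v hvW hvN ↦ by
    by_contra hv
    exact (hW v hvW).not_gt (hVn v hvN hv)
  have h₁ := Submodule.finrank_add_finrank_le_of_disjoint hdisj
  have h₂ := Submodule.finrank_add_le_finrank_add_finrank Vp Vn
  rw [hsup, finrank_top] at h₂
  omega

lemma neg_of_orthogonal_of_finrank_le (hB : B.IsRefl) (hVn : ∀ v ∈ Vn, v ≠ 0 → B v v < 0)
    (hsup : Vp ⊔ Vn = ⊤) (hPpos : ∀ v ∈ P, v ≠ 0 → 0 < B v v)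
    (hPdim : finrank ℝ Vp ≤ finrank ℝ P) {x : V} (hxP : ∀ y ∈ P, B x y = 0) (hx : x ≠ 0) :
    B x x < 0 := by
  by_contra! hxx
  have hxnotP : x ∉ P := fun hxP' ↦ (hPpos x hxP' hx).ne' (hxP x hxP')
  have := finrank_le_of_forall_nonneg hVn hsup (nonneg_sup_span_of_orthogonal hB hPpos hxP hxx)
  rw [Submodule.finrank_sup_span_singleton hxnotP] at this
  omega

end Signature

theorem stmt_5_general {V : Type*} [AddCommGroup V] [Module ℝ V] [FiniteDimensional ℝ V]
    (B : LinearMap.BilinForm ℝ V) (hsymm : ∀ x y : V, B x y = B y x)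
    (n : ℕ)
    (hsig : ∃ Vp Vn : Submodule ℝ V,
      (∀ v ∈ Vp, v ≠ 0 → 0 < B v v) ∧ (∀ v ∈ Vn, v ≠ 0 → B v v < 0) ∧
      (∀ v ∈ Vp, ∀ w ∈ Vn, B v w = 0) ∧ Vp ⊔ Vn = ⊤ ∧
      finrank ℝ Vp = 3 ∧ finrank ℝ Vn = n)
    -- the lattice: a finitely generated free full-rank `ℤ`-submodule
    (Λ : Submodule ℤ V)
    -- the finite group acting by isometries preserving `Λ`
    {G : Type*} [Group G] (ρ : G →* (V ≃ₗ[ℝ] V))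
    (hiso : ∀ (g : G) (x y : V), B (ρ g x) (ρ g y) = B x y)
    -- the invariant positive-definite 3-space
    (P : Submodule ℝ V) (hPdim : finrank ℝ P = 3)
    (hPpos : ∀ v ∈ P, v ≠ 0 → 0 < B v v)
    (hPinv : ∀ g : G, P.map (ρ g).toLinearMap = P)
    -- `I_G`: the sum of all irreducible subrepresentations isomorphic to one in `P`
    (IG : Submodule ℝ V)
    (hIG : IG = sSup {W : Submodule ℝ V |
      (∀ g : G, W.map (ρ g).toLinearMap = W) ∧ W ≠ ⊥ ∧
      (∀ W' : Submodule ℝ V, W' ≤ W → (∀ g : G, W'.map (ρ g).toLinearMap = W') →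
        W' = ⊥ ∨ W' = W) ∧
      ∃ U : Submodule ℝ V, U ≤ P ∧ (∀ g : G, U.map (ρ g).toLinearMap = U) ∧
        ∃ e : W ≃ₗ[ℝ] U, ∀ (g : G) (w w' : W), (w' : V) = ρ g (w : V) →
          (e w' : V) = ρ g (e w : V)}) :
    -- conclusion: `L_G = I_G^⊥ ∩ Λ` is negative definite
    ∀ x : V, x ∈ Λ → (∀ y ∈ IG, B x y = 0) → x ≠ 0 → B x x < 0 := by
  intro x _ hxIG hx
  obtain ⟨Vp, Vn, -, hVn, -, hsup, hVpdim, -⟩ := hsig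
  have hB : B.IsRefl := fun a b h ↦ (hsymm b a).trans h
  have hPIG : P ≤ IG := by
    subst hIG
    refine le_of_forall_isIrreducibleSubspace_le hB hiso hPinv hPpos
      (isInvariantSubspace_sSup fun W hW ↦ hW.1) fun W hWP hWirr ↦ le_sSup ?_
    obtain ⟨hWinv, hWne, hWmin⟩ := hWirr
    exact ⟨hWinv, hWne, hWmin, W, hWP, hWinv, LinearEquiv.refl ℝ W, fun _ _ _ h ↦ h⟩
  exact neg_of_orthogonal_of_finrank_le hB hVn hsup hPpos (hVpdim.trans hPdim.symm).le
    (fun y hy ↦ hxIG y (hPIG hy)) hx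

/-- Let `Λ` be a full-rank lattice in a real quadratic space `(V, B)` of signature
`(3, n)`, `n ≥ 1`, and let a finite group `G` act on `V` by isometries preserving `Λ`
and a positive-definite `3`-dimensional subspace `P`.  Let `I_G` be the sum of all
irreducible real `G`-subrepresentations of `V` isomorphic (equivariantly) to a
subrepresentation of `P`.  Then the sublattice `L_G = I_G^⊥ ∩ Λ` is negative
definite. -/
theorem stmt_5 {V : Type*} [AddCommGroup V] [Module ℝ V] [FiniteDimensional ℝ V]
    (B : LinearMap.BilinForm ℝ V) (hsymm : ∀ x y : V, B x y = B y x)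
    (hnd : ∀ x : V, (∀ y : V, B x y = 0) → x = 0)
    (n : ℕ) (hn : 1 ≤ n)
    (hsig : ∃ Vp Vn : Submodule ℝ V,
      (∀ v ∈ Vp, v ≠ 0 → 0 < B v v) ∧ (∀ v ∈ Vn, v ≠ 0 → B v v < 0) ∧
      (∀ v ∈ Vp, ∀ w ∈ Vn, B v w = 0) ∧ Vp ⊔ Vn = ⊤ ∧
      finrank ℝ Vp = 3 ∧ finrank ℝ Vn = n)
    -- the lattice: a finitely generated free full-rank `ℤ`-submodule
    (Λ : Submodule ℤ V) (hΛrank : Submodule.span ℝ (Λ : Set V) = ⊤)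
    (hΛfree : Module.Free ℤ Λ) (hΛfg : Module.Finite ℤ Λ)
    -- the finite group acting by isometries preserving `Λ`
    {G : Type*} [Group G] [Finite G] (ρ : G →* (V ≃ₗ[ℝ] V))
    (hiso : ∀ (g : G) (x y : V), B (ρ g x) (ρ g y) = B x y)
    (hΛinv : ∀ (g : G), ∀ x ∈ Λ, ρ g x ∈ Λ)
    -- the invariant positive-definite 3-space
    (P : Submodule ℝ V) (hPdim : finrank ℝ P = 3)
    (hPpos : ∀ v ∈ P, v ≠ 0 → 0 < B v v)
    (hPinv : ∀ g : G, P.map (ρ g).toLinearMap = P)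
    -- `I_G`: the sum of all irreducible subrepresentations isomorphic to one in `P`
    (IG : Submodule ℝ V)
    (hIG : IG = sSup {W : Submodule ℝ V |
      (∀ g : G, W.map (ρ g).toLinearMap = W) ∧ W ≠ ⊥ ∧
      (∀ W' : Submodule ℝ V, W' ≤ W → (∀ g : G, W'.map (ρ g).toLinearMap = W') →
        W' = ⊥ ∨ W' = W) ∧
      ∃ U : Submodule ℝ V, U ≤ P ∧ (∀ g : G, U.map (ρ g).toLinearMap = U) ∧
        ∃ e : W ≃ₗ[ℝ] U, ∀ (g : G) (w w' : W), (w' : V) = ρ g (w : V) →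
          (e w' : V) = ρ g (e w : V)}) :
    -- conclusion: `L_G = I_G^⊥ ∩ Λ` is negative definite
    ∀ x : V, x ∈ Λ → (∀ y ∈ IG, B x y = 0) → x ≠ 0 → B x x < 0 :=
  stmt_5_general B hsymm n hsig Λ ρ hiso P hPdim hPpos hPinv IG hIG
end
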